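/- arXiv:1901.03150 — 2 statements merged into one kernel-verified Lean document; each statement's English description precedes it below -/
import Mathlib

section
/- Let ρ > 0 be a positive C² function of (t,x) on (0,∞)×ℝ and u a C² function such that ∂_t ρ + ∂_x(ρu) = 0. Let μ(ρ) = μρ^α with μ > 0, α > 0, define φ by φ'(ρ) = μ(ρ)/ρ² (i.e. φ(ρ) = (μ/(α−1))ρ^{α−1} for α ≠ 1, φ(ρ) = μ ln ρ for α = 1), and set v = u + ∂_x φ(ρ). Then ρ ∂_t v + ρ u ∂_x v = ρ ∂_t u + ρ u ∂_x u + ∂_x(μ(ρ) ∂_x u) − ∂_x ( (μ(ρ)/ρ) ∂_x (ρ u) ) + ∂_x ( (μ(ρ)/ρ) ∂_x ρ · u ) evaluated via the mass equation; in particular, ∂_t ρ + ∂_x(ρ v) = ∂_x( (μ(ρ)/ρ) ∂_x ρ ). -/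
/-- Partial derivative in time of a function of `(t, x)`. -/
noncomputable def pt (f : ℝ → ℝ → ℝ) (t x : ℝ) : ℝ := deriv (fun τ => f τ x) t

/-- Partial derivative in space of a function of `(t, x)`. -/
noncomputable def px (f : ℝ → ℝ → ℝ) (t x : ℝ) : ℝ := deriv (fun y => f t y) x

/-- Effective-velocity reformulation of the continuity equation: if
`∂ₜρ + ∂ₓ(ρu) = 0`, `φ'(ρ) = μ(ρ)/ρ²` with `μ(ρ) = μρ^α`, and `v = u + ∂ₓφ(ρ)`,
then `∂ₜρ + ∂ₓ(ρv) = ∂ₓ((μ(ρ)/ρ)∂ₓρ)`. -/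
theorem effective_velocity_continuity_equation
    (μ α : ℝ) (hμ : 0 < μ) (hα : 0 < α)
    (ρ u : ℝ → ℝ → ℝ)
    (hρpos : ∀ t x : ℝ, 0 < t → 0 < ρ t x)
    (hρ : ContDiffOn ℝ 2 (Function.uncurry ρ) (Set.Ioi (0 : ℝ) ×ˢ Set.univ))
    (hu : ContDiffOn ℝ 2 (Function.uncurry u) (Set.Ioi (0 : ℝ) ×ˢ Set.univ))
    (hmass : ∀ t x : ℝ, 0 < t →
      pt ρ t x + px (fun t x => ρ t x * u t x) t x = 0)
    (φ : ℝ → ℝ) (hφreg : ContDiffOn ℝ 2 φ (Set.Ioi (0 : ℝ)))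
    (hφ : ∀ r : ℝ, 0 < r → HasDerivAt φ (μ * r ^ α / r ^ 2) r)
    (v : ℝ → ℝ → ℝ)
    (hv : v = fun t x => u t x + px (fun t y => φ (ρ t y)) t x) :
    ∀ t x : ℝ, 0 < t →
      pt ρ t x + px (fun t x => ρ t x * v t x) t x =
        px (fun t x => (μ * ρ t x ^ α / ρ t x) * px ρ t x) t x := by
  intro t x ht
  -- space slices are C²
  have hslice : ∀ f : ℝ → ℝ → ℝ,
      ContDiffOn ℝ 2 (Function.uncurry f) (Set.Ioi (0 : ℝ) ×ˢ Set.univ) →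
      ContDiff ℝ 2 (fun y => f t y) := by
    intro f hf
    have he : ContDiff ℝ 2 (fun y : ℝ => ((t, y) : ℝ × ℝ)) :=
      (contDiff_const.prodMk contDiff_id)
    have hmaps : ∀ y : ℝ, ((t, y) : ℝ × ℝ) ∈ Set.Ioi (0 : ℝ) ×ˢ (Set.univ : Set ℝ) := by
      intro y; exact ⟨ht, trivial⟩
    have := hf.comp (he.contDiffOn (s := Set.univ))
      (fun y _ => hmaps y)
    rw [contDiffOn_univ] at this
    exact this
  have hF : ContDiff ℝ 2 (fun y => ρ t y) := hslice ρ hρ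
  have hU : ContDiff ℝ 2 (fun y => u t y) := hslice u hu
  have hFd : Differentiable ℝ (fun y => ρ t y) := hF.differentiable (by norm_num)
  have hUd : Differentiable ℝ (fun y => u t y) := hU.differentiable (by norm_num)
  have hFpos : ∀ y, 0 < ρ t y := fun y => hρpos t y ht
  have hFne : ∀ y, ρ t y ≠ 0 := fun y => (hFpos y).ne'
  -- derivative of φ ∘ ρ(t,·)
  have key : ∀ y, ρ t y * v t y =
      ρ t y * u t y + μ * ρ t y ^ α / ρ t y * deriv (fun y' => ρ t y') y := by
    intro y
    have h1 : deriv (fun y' => φ (ρ t y')) y =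
        μ * ρ t y ^ α / ρ t y ^ 2 * deriv (fun y' => ρ t y') y :=
      ((hφ _ (hFpos y)).comp y (hFd y).hasDerivAt).deriv
    rw [hv]
    simp only [px, h1]
    have h2 := hFne y
    field_simp
  -- differentiability of the flux term
  have hderivF : ContDiff ℝ 1 (deriv (fun y => ρ t y)) := by
    have : ContDiff ℝ ((1 : ℕ) + 1) (fun y => ρ t y) := by exact_mod_cast hF
    exact (contDiff_succ_iff_deriv.mp this).2.2
  have hg : Differentiable ℝ
      (fun y => μ * ρ t y ^ α / ρ t y * deriv (fun y' => ρ t y') y) := by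
    intro y
    have h1 : DifferentiableAt ℝ (fun y' => ρ t y' ^ α) y :=
      (hFd y).rpow_const (Or.inl (hFne y))
    exact (((h1.const_mul μ).div (hFd y) (hFne y)).mul
      ((hderivF.differentiable one_ne_zero) y))
  have hρu : DifferentiableAt ℝ (fun y => ρ t y * u t y) x := (hFd x).mul (hUd x)
  have hmass' := hmass t x ht
  simp only [pt, px] at hmass' ⊢
  have hrw : (fun y => ρ t y * v t y) =
      fun y => (fun y' => ρ t y' * u t y') y +
        (fun y' => μ * ρ t y' ^ α / ρ t y' * deriv (fun z => ρ t z) y') y := by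
    funext y; exact key y
  rw [hrw, deriv_fun_add hρu (hg x)]
  linarith
end

section
/- Let α_n : [t₁, t₂] → [0, ∞) be continuous and I_n : [t₁, t₂] → ℝ be C¹, and suppose L : [t₁, t₂] → ℝ is C¹ and satisfies L'(t) + α_n(t) L(t) = −I_n'(t) on [t₁, t₂]. Then for all t ∈ [t₁, t₂]: |L(t)| ≤ |L(t₁)| + |I_n(t₁)| + |I_n(t)| + ∫_{t₁}^{t} e^{−∫_s^t α_n(τ)dτ} α_n(s) |I_n(s)| ds. In particular, if |I_n(s)| ≤ K for all s ∈ [t₁, t₂], then |L(t)| ≤ |L(t₁)| + 4K. -/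
/-!
`u = L + Iₙ` solves `u' + αₙ u = αₙ Iₙ`, so Duhamel's formula gives
`L(t) + Iₙ(t) = e^{-∫_{t₁}^t αₙ} (L(t₁) + Iₙ(t₁)) + ∫_{t₁}^t e^{-∫_s^t αₙ} αₙ(s) Iₙ(s) ds`
without any derivative on `Iₙ` (this replaces the integration by parts). Since `αₙ ≥ 0`, the
prefactor is at most `1`, and Duhamel's formula for `u ≡ 1` shows that the kernel
`e^{-∫_s^t αₙ} αₙ(s)` has total mass `1 - e^{-∫_{t₁}^t αₙ} ≤ 1`.
-/

open MeasureTheory intervalIntegral Set Real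

section LinearODE

variable {α : ℝ → ℝ} {a b : ℝ}

theorem hasDerivWithinAt_integral_Icc (hα : ContinuousOn α (Icc a b)) {t : ℝ}
    (ht : t ∈ Icc a b) :
    HasDerivWithinAt (fun s => ∫ τ in a..s, α τ) (α t) (Icc a b) t :=
  have : Fact (t ∈ Icc a b) := ⟨ht⟩
  integral_hasDerivWithinAt_right
    (hα.mono (uIcc_subset_Icc (left_mem_Icc.2 (ht.1.trans ht.2)) ht)).intervalIntegrable
    (hα.stronglyMeasurableAtFilter_nhdsWithin measurableSet_Icc t) (hα t ht)

theorem duhamel_formula {u u' f : ℝ → ℝ} (hab : a ≤ b) (hα : ContinuousOn α (Icc a b))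
    (hf : ContinuousOn f (Icc a b)) (hu : ∀ t ∈ Icc a b, HasDerivAt u (u' t) t)
    (hode : ∀ t ∈ Icc a b, u' t + α t * u t = f t) :
    u b = exp (-∫ τ in a..b, α τ) * u a + ∫ s in a..b, exp (-∫ τ in s..b, α τ) * f s := by
  set A : ℝ → ℝ := fun s => ∫ τ in a..s, α τ
  have hA : ∀ s ∈ Icc a b, HasDerivWithinAt A (α s) (Icc a b) s :=
    fun s hs => hasDerivWithinAt_integral_Icc hα hs
  -- `exp A` is an integrating factor.
  have hEu : ∀ s ∈ Icc a b,
      HasDerivWithinAt (fun s => exp (A s) * u s) (exp (A s) * f s) (Icc a b) s := by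
    intro s hs
    refine ((hA s hs).exp.mul (hu s hs).hasDerivWithinAt).congr_deriv ?_
    rw [← hode s hs]
    ring
  have hEc : ContinuousOn (fun s => exp (A s)) (Icc a b) :=
    fun s hs => (hA s hs).continuousWithinAt.rexp
  have hFTC : ∫ s in a..b, exp (A s) * f s = exp (A b) * u b - exp (A a) * u a :=
    integral_eq_sub_of_hasDerivAt_of_le hab (fun s hs => (hEu s hs).continuousWithinAt)
      (fun s hs => (hEu s (Ioo_subset_Icc_self hs)).hasDerivAt (Icc_mem_nhds hs.1 hs.2))
      ((hEc.mul hf).intervalIntegrable_of_Icc hab)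
  have hkernel : ∀ s ∈ uIcc a b,
      exp (-∫ τ in s..b, α τ) * f s = exp (-A b) * (exp (A s) * f s) := by
    intro s hs
    rw [uIcc_of_le hab] at hs
    have hαi : ∀ c ∈ Icc a b, IntervalIntegrable α volume a c := fun c hc =>
      (hα.mono (Icc_subset_Icc_right hc.2)).intervalIntegrable_of_Icc hc.1
    rw [← integral_interval_sub_left (hαi b (right_mem_Icc.2 hab)) (hαi s hs), neg_sub,
      sub_eq_add_neg, exp_add]
    ring
  have hAa : A a = 0 := integral_same
  have hinv : exp (-A b) * exp (A b) = 1 := by rw [← exp_add, neg_add_cancel, exp_zero]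
  rw [integral_congr hkernel, intervalIntegral.integral_const_mul, hFTC, hAa, exp_zero]
  linear_combination -(u b) * hinv

theorem integral_exp_neg_integral_mul_eq (hab : a ≤ b) (hα : ContinuousOn α (Icc a b)) :
    ∫ s in a..b, exp (-∫ τ in s..b, α τ) * α s = 1 - exp (-∫ τ in a..b, α τ) := by
  have h := duhamel_formula (u := fun _ => 1) (u' := fun _ => 0) hab hα hα
    (fun t _ => hasDerivAt_const t 1) (fun t _ => by simp)
  linarith

theorem continuousOn_exp_neg_integral (hab : a ≤ b) (hα : ContinuousOn α (Icc a b)) :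
    ContinuousOn (fun s => exp (-∫ τ in s..b, α τ)) (Icc a b) := by
  have h := continuousOn_primitive_interval_left (μ := volume)
    (uIcc_of_le hab ▸ hα.integrableOn_Icc : IntegrableOn α (uIcc a b))
  rw [uIcc_of_le hab] at h
  exact h.neg.rexp

theorem integral_exp_neg_integral_mul_abs_le {g : ℝ → ℝ} {K : ℝ} (hab : a ≤ b)
    (hα : ContinuousOn α (Icc a b)) (hαnn : ∀ t ∈ Icc a b, 0 ≤ α t)
    (hg : ContinuousOn g (Icc a b)) (hK : ∀ s ∈ Icc a b, |g s| ≤ K) :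
    ∫ s in a..b, exp (-∫ τ in s..b, α τ) * α s * |g s| ≤ K := by
  have hk := continuousOn_exp_neg_integral hab hα
  calc ∫ s in a..b, exp (-∫ τ in s..b, α τ) * α s * |g s|
      ≤ ∫ s in a..b, K * (exp (-∫ τ in s..b, α τ) * α s) := by
        refine integral_mono_on hab (((hk.mul hα).mul hg.abs).intervalIntegrable_of_Icc hab)
          ((continuousOn_const.mul (hk.mul hα)).intervalIntegrable_of_Icc hab) fun s hs => ?_
        rw [mul_comm K]
        exact mul_le_mul_of_nonneg_left (hK s hs) (mul_nonneg (exp_pos _).le (hαnn s hs))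
    _ = K * (1 - exp (-∫ τ in a..b, α τ)) := by
        rw [intervalIntegral.integral_const_mul, integral_exp_neg_integral_mul_eq hab hα]
    _ ≤ K :=
        mul_le_of_le_one_right ((abs_nonneg _).trans (hK a (left_mem_Icc.2 hab)))
          (sub_le_self _ (exp_pos _).le)

theorem abs_le_add_integral_of_ode {I I' L L' : ℝ → ℝ} (hab : a ≤ b)
    (hα : ContinuousOn α (Icc a b)) (hαnn : ∀ t ∈ Icc a b, 0 ≤ α t)
    (hI : ∀ t ∈ Icc a b, HasDerivAt I (I' t) t) (hL : ∀ t ∈ Icc a b, HasDerivAt L (L' t) t)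
    (hode : ∀ t ∈ Icc a b, L' t + α t * L t = -I' t) :
    |L b| ≤ |L a| + |I a| + |I b| + ∫ s in a..b, exp (-∫ τ in s..b, α τ) * α s * |I s| := by
  have hduh := duhamel_formula (u := L + I) (u' := L' + I') (f := α * I) hab hα
    (hα.mul (HasDerivAt.continuousOn hI)) (fun t ht => (hL t ht).add (hI t ht))
    (fun t ht => by simp only [Pi.add_apply, Pi.mul_apply]; linear_combination hode t ht)
  simp only [Pi.add_apply, Pi.mul_apply] at hduh
  have he : exp (-∫ τ in a..b, α τ) ≤ 1 :=
    exp_le_one_iff.2 (neg_nonpos.2 (integral_nonneg hab hαnn))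
  have he0 : 0 ≤ exp (-∫ τ in a..b, α τ) := (exp_pos _).le
  generalize exp (-∫ τ in a..b, α τ) = e at hduh he he0
  have hsource : |∫ s in a..b, exp (-∫ τ in s..b, α τ) * (α s * I s)|
      ≤ ∫ s in a..b, exp (-∫ τ in s..b, α τ) * α s * |I s| := by
    refine (abs_integral_le_integral_abs hab).trans_eq (integral_congr fun s hs => ?_)
    rw [uIcc_of_le hab] at hs
    simp only [abs_mul, abs_of_nonneg (exp_pos _).le, abs_of_nonneg (hαnn s hs), mul_assoc]
  have hLb : L b =
      e * (L a + I a) + (∫ s in a..b, exp (-∫ τ in s..b, α τ) * (α s * I s)) - I b := by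
    linarith
  calc |L b|
      ≤ |e * (L a + I a)| + |∫ s in a..b, exp (-∫ τ in s..b, α τ) * (α s * I s)| + |I b| := by
        rw [hLb]
        exact (abs_sub _ _).trans (add_le_add_left (abs_add_le _ _) _)
    _ ≤ e * (|L a| + |I a|) + (∫ s in a..b, exp (-∫ τ in s..b, α τ) * α s * |I s|) + |I b| := by
        rw [abs_mul, abs_of_nonneg he0]
        gcongr
        exact abs_add_le _ _
    _ ≤ |L a| + |I a| + |I b| + ∫ s in a..b, exp (-∫ τ in s..b, α τ) * α s * |I s| := by
        have := mul_le_of_le_one_left (add_nonneg (abs_nonneg (L a)) (abs_nonneg (I a))) he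
        linarith

end LinearODE

theorem hoff_ode_estimate_general
    (t₁ t₂ : ℝ)
    (αn In In' L L' : ℝ → ℝ)
    (hα : ContinuousOn αn (Set.Icc t₁ t₂))
    (hαnn : ∀ t ∈ Set.Icc t₁ t₂, 0 ≤ αn t)
    (hIn : ∀ t ∈ Set.Icc t₁ t₂, HasDerivAt In (In' t) t)
    (hL : ∀ t ∈ Set.Icc t₁ t₂, HasDerivAt L (L' t) t)
    (hODE : ∀ t ∈ Set.Icc t₁ t₂, L' t + αn t * L t = -In' t) :
    (∀ t ∈ Set.Icc t₁ t₂,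
      |L t| ≤ |L t₁| + |In t₁| + |In t| +
        ∫ s in t₁..t, Real.exp (-∫ τ in s..t, αn τ) * αn s * |In s|) ∧
    (∀ K : ℝ, (∀ s ∈ Set.Icc t₁ t₂, |In s| ≤ K) →
      ∀ t ∈ Set.Icc t₁ t₂, |L t| ≤ |L t₁| + 4 * K) := by
  have hmain : ∀ t ∈ Icc t₁ t₂, |L t| ≤ |L t₁| + |In t₁| + |In t| +
      ∫ s in t₁..t, exp (-∫ τ in s..t, αn τ) * αn s * |In s| := by
    intro t ht
    have hsub : Icc t₁ t ⊆ Icc t₁ t₂ := Icc_subset_Icc_right ht.2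
    exact abs_le_add_integral_of_ode ht.1 (hα.mono hsub) (fun s hs => hαnn s (hsub hs))
      (fun s hs => hIn s (hsub hs)) (fun s hs => hL s (hsub hs)) (fun s hs => hODE s (hsub hs))
  refine ⟨hmain, fun K hK t ht => ?_⟩
  have hsub : Icc t₁ t ⊆ Icc t₁ t₂ := Icc_subset_Icc_right ht.2
  have hkernel := integral_exp_neg_integral_mul_abs_le ht.1 (hα.mono hsub)
    (fun s hs => hαnn s (hsub hs)) ((HasDerivAt.continuousOn hIn).mono hsub)
    (fun s hs => hK s (hsub hs))
  linarith [hmain t ht, hK t₁ (left_mem_Icc.2 (ht.1.trans ht.2)), hK t ht, abs_nonneg (In t)]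

/-- Hoff's ODE estimate: if `L' + αₙ L = −Iₙ'` on `[t₁, t₂]` with `αₙ ≥ 0`, then
`|L(t)| ≤ |L(t₁)| + |Iₙ(t₁)| + |Iₙ(t)| + ∫ₜ₁ᵗ e^{−∫ₛᵗ αₙ} αₙ(s)|Iₙ(s)| ds`; in
particular `|L(t)| ≤ |L(t₁)| + 4K` whenever `|Iₙ| ≤ K`. -/
theorem hoff_ode_estimate
    (t₁ t₂ : ℝ) (h12 : t₁ ≤ t₂)
    (αn In In' L L' : ℝ → ℝ)
    (hα : ContinuousOn αn (Set.Icc t₁ t₂))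
    (hαnn : ∀ t ∈ Set.Icc t₁ t₂, 0 ≤ αn t)
    (hIn : ∀ t ∈ Set.Icc t₁ t₂, HasDerivAt In (In' t) t)
    (hIn' : ContinuousOn In' (Set.Icc t₁ t₂))
    (hL : ∀ t ∈ Set.Icc t₁ t₂, HasDerivAt L (L' t) t)
    (hL' : ContinuousOn L' (Set.Icc t₁ t₂))
    (hODE : ∀ t ∈ Set.Icc t₁ t₂, L' t + αn t * L t = -In' t) :
    (∀ t ∈ Set.Icc t₁ t₂,
      |L t| ≤ |L t₁| + |In t₁| + |In t| +
        ∫ s in t₁..t, Real.exp (-∫ τ in s..t, αn τ) * αn s * |In s|) ∧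
    (∀ K : ℝ, (∀ s ∈ Set.Icc t₁ t₂, |In s| ≤ K) →
      ∀ t ∈ Set.Icc t₁ t₂, |L t| ≤ |L t₁| + 4 * K) :=
  hoff_ode_estimate_general t₁ t₂ αn In In' L L' hα hαnn hIn hL hODE
end
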